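/- arXiv:2109.00159 — 5 statements merged into one kernel-verified Lean document; each statement's English description precedes it below -/
import Mathlib

section
/- Let X be a Banach space, f : X → X, p̄ ∈ X, and A : X → X a bounded injective linear operator with A∘f mapping X to X. Suppose Y₀ ≥ 0 satisfies ‖A f(p̄)‖ ≤ Y₀, and Z : (0,∞) → (0,∞) satisfies ‖I − A Df(q)‖ ≤ Z(r) for all q with ‖q − p̄‖ ≤ r, where f is Fréchet differentiable. If there exists r₀ > 0 with r₀ Z(r₀) − r₀ + Y₀ < 0, then there is a unique p̃ in the closed ball of radius r₀ about p̄ with f(p̃) = 0. -/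
/-!
The zeros of `f` are the fixed points of the Newton-like operator `T x = x - A (f x)`, because
`A` is injective. Its derivative `I - A ∘ Df` is bounded by `Z r₀ < 1` on the ball, so by the mean
value inequality `T` is a `Z r₀`-contraction there, and it maps the ball into itself since
`‖T p - p̄‖ ≤ Z r₀ ‖p - p̄‖ + Y₀ ≤ r₀ Z r₀ + Y₀ < r₀`. Banach's fixed point theorem concludes.
-/

open Function Metric Set
open scoped NNReal

theorem isFixedPt_sub_map_iff {E F G : Type*} [AddGroup E] [AddGroup F] [FunLike G F E]
    [AddMonoidHomClass G F E] {A : G} (hA : Injective A) (f : E → F) (x : E) :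
    IsFixedPt (fun y ↦ y - A (f y)) x ↔ f x = 0 := by
  rw [IsFixedPt, sub_eq_self, map_eq_zero_iff A hA]

section ClosedBall

variable {α : Type*} [MetricSpace α] {T : α → α} {c : α} {r : ℝ} {K : ℝ≥0}

theorem LipschitzOnWith.mapsTo_closedBall (hT : LipschitzOnWith K T (closedBall c r))
    (hc : dist (T c) c + K * r ≤ r) : MapsTo T (closedBall c r) (closedBall c r) := by
  intro x hx
  have hr : 0 ≤ r := dist_nonneg.trans hx
  calc dist (T x) c ≤ dist (T x) (T c) + dist (T c) c := dist_triangle _ _ _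
    _ ≤ K * dist x c + dist (T c) c := by
        gcongr; exact hT.dist_le_mul x hx c (mem_closedBall_self hr)
    _ ≤ K * r + dist (T c) c := by gcongr; exact hx
    _ ≤ r := by linarith

theorem LipschitzOnWith.eq_of_isFixedPt {s : Set α} (hK : K < 1) (hT : LipschitzOnWith K T s)
    {x y : α} (hx : x ∈ s) (hy : y ∈ s) (hfx : IsFixedPt T x) (hfy : IsFixedPt T y) :
    x = y := by
  have hle : dist x y ≤ K * dist x y := by
    simpa only [hfx.eq, hfy.eq] using hT.dist_le_mul x hx y hy
  have hK' : (K : ℝ) < 1 := by exact_mod_cast hK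
  exact dist_le_zero.mp (by nlinarith [dist_nonneg (x := x) (y := y)])

theorem existsUnique_isFixedPt_mem_closedBall [CompleteSpace α] (hK : K < 1)
    (hT : LipschitzOnWith K T (closedBall c r)) (hc : dist (T c) c + K * r ≤ r) :
    ∃! x, x ∈ closedBall c r ∧ IsFixedPt T x := by
  have hr : 0 ≤ r := by
    have hK' : (K : ℝ) < 1 := by exact_mod_cast hK
    nlinarith [dist_nonneg (x := T c) (y := c)]
  have hmaps := hT.mapsTo_closedBall hc
  have hcontr : ContractingWith K (hmaps.restrict T _ _) :=
    ⟨hK, (hmaps.lipschitzOnWith_iff_restrict).mp hT⟩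
  obtain ⟨x, hx, hfix, -⟩ := hcontr.exists_fixedPoint' isClosed_closedBall.isComplete hmaps
    (mem_closedBall_self hr) (edist_ne_top _ _)
  exact ⟨x, ⟨hx, hfix⟩, fun y ⟨hy, hfy⟩ ↦ hT.eq_of_isFixedPt hK hy hx hfy hfix⟩

end ClosedBall

theorem stmt_5_general {X : Type*} [NormedAddCommGroup X] [NormedSpace ℝ X] [CompleteSpace X]
    (f : X → X) (Df : X → X →L[ℝ] X) (hf : ∀ x, HasFDerivAt f (Df x) x)
    (A : X →L[ℝ] X) (hA : Function.Injective A)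
    (pbar : X) (Y₀ : ℝ) (hY : ‖A (f pbar)‖ ≤ Y₀)
    (Z : ℝ → ℝ)
    (hZ : ∀ r > (0 : ℝ), ∀ q ∈ Metric.closedBall pbar r,
      ‖ContinuousLinearMap.id ℝ X - A.comp (Df q)‖ ≤ Z r)
    (r₀ : ℝ) (hr₀ : 0 < r₀) (hrad : r₀ * Z r₀ - r₀ + Y₀ < 0) :
    ∃! p : X, p ∈ Metric.closedBall pbar r₀ ∧ f p = 0 := by
  have hZ₀ : 0 ≤ Z r₀ := (norm_nonneg _).trans (hZ r₀ hr₀ pbar (mem_closedBall_self hr₀.le))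
  have hZ₁ : Z r₀ < 1 := by nlinarith [(norm_nonneg _).trans hY]
  let K : ℝ≥0 := ⟨Z r₀, hZ₀⟩
  have hT : LipschitzOnWith K (fun x ↦ x - A (f x)) (closedBall pbar r₀) :=
    (convex_closedBall pbar r₀).lipschitzOnWith_of_nnnorm_hasFDerivWithin_le
      (fun x _ ↦ ((hasFDerivAt_id x).sub (A.hasFDerivAt.comp x (hf x))).hasFDerivWithinAt)
      (fun x hx ↦ hZ r₀ hr₀ x hx)
  have hc : dist (pbar - A (f pbar)) pbar + K * r₀ ≤ r₀ := by
    rw [dist_eq_norm, sub_sub_cancel_left, norm_neg]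
    change ‖A (f pbar)‖ + Z r₀ * r₀ ≤ r₀
    linarith
  simpa only [isFixedPt_sub_map_iff hA] using
    existsUnique_isFixedPt_mem_closedBall (by exact_mod_cast hZ₁) hT hc

/-- Newton–Kantorovich type theorem (radii polynomial approach). -/
theorem stmt_5 {X : Type*} [NormedAddCommGroup X] [NormedSpace ℝ X] [CompleteSpace X]
    (f : X → X) (Df : X → X →L[ℝ] X) (hf : ∀ x, HasFDerivAt f (Df x) x)
    (A : X →L[ℝ] X) (hA : Function.Injective A)
    (pbar : X) (Y₀ : ℝ) (hY₀ : 0 ≤ Y₀) (hY : ‖A (f pbar)‖ ≤ Y₀)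
    (Z : ℝ → ℝ) (hZpos : ∀ r > (0 : ℝ), 0 < Z r)
    (hZ : ∀ r > (0 : ℝ), ∀ q ∈ Metric.closedBall pbar r,
      ‖ContinuousLinearMap.id ℝ X - A.comp (Df q)‖ ≤ Z r)
    (r₀ : ℝ) (hr₀ : 0 < r₀) (hrad : r₀ * Z r₀ - r₀ + Y₀ < 0) :
    ∃! p : X, p ∈ Metric.closedBall pbar r₀ ∧ f p = 0 :=
  stmt_5_general f Df hf A hA pbar Y₀ hY Z hZ r₀ hr₀ hrad
end

section
/- Suppose P : 𝔻 → X (𝔻 the closed unit disk in ℂ, X a Banach space) is analytic, λ ∈ ℂ with Re λ > 0, and P satisfies the invariance equation g(P(σ)) = λ σ P'(σ) for all σ ∈ 𝔻, where g : X → X is locally Lipschitz. Then for each σ ∈ 𝔻, the function a(t) := P(e^{λ t} σ), defined for t ≤ 0, solves the differential equation a'(t) = g(a(t)) on (−∞, 0], and a(t) → P(0) as t → −∞. -/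
open Complex Filter Topology

lemma Complex.norm_exp_mul_ofReal_le_one {l : ℂ} (hl : 0 ≤ l.re) {t : ℝ} (ht : t ≤ 0) :
    ‖exp (l * t)‖ ≤ 1 := by
  rw [norm_exp, re_mul_ofReal, Real.exp_le_one_iff]
  exact mul_nonpos_of_nonneg_of_nonpos hl ht

lemma Complex.exp_mul_ofReal_mul_mem_closedBall {l : ℂ} (hl : 0 ≤ l.re) {t : ℝ} (ht : t ≤ 0)
    {σ : ℂ} {r : ℝ} (hσ : σ ∈ Metric.closedBall (0 : ℂ) r) :
    exp (l * t) * σ ∈ Metric.closedBall (0 : ℂ) r := by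
  rw [mem_closedBall_zero_iff] at hσ ⊢
  calc ‖exp (l * t) * σ‖ = ‖exp (l * t)‖ * ‖σ‖ := norm_mul _ _
    _ ≤ 1 * r := mul_le_mul (norm_exp_mul_ofReal_le_one hl ht) hσ (norm_nonneg _) zero_le_one
    _ = r := one_mul r

lemma Complex.hasDerivAt_exp_mul_ofReal_mul (l σ : ℂ) (t : ℝ) :
    HasDerivAt (fun s : ℝ => exp (l * s) * σ) (l * (exp (l * t) * σ)) t := by
  have hlin : HasDerivAt (fun s : ℝ => l * (s : ℂ)) l t := by
    simpa using (ofRealCLM.hasDerivAt (x := t)).const_mul l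
  have := hlin.cexp.mul_const σ
  rwa [mul_comm (exp _) l, mul_assoc] at this

lemma Complex.tendsto_exp_mul_ofReal_atBot {l : ℂ} (hl : 0 < l.re) :
    Tendsto (fun t : ℝ => exp (l * t)) atBot (𝓝 0) := by
  rw [tendsto_zero_iff_norm_tendsto_zero]
  simp only [norm_exp, re_mul_ofReal]
  exact Real.tendsto_exp_atBot.comp (tendsto_id.const_mul_atBot hl)

theorem stmt_6_general {X : Type*} [NormedAddCommGroup X] [NormedSpace ℂ X]
    (P P' : ℂ → X) (g : X → X)
    (l : ℂ) (hl : 0 < l.re)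
    (hP : ∀ σ ∈ Metric.closedBall (0 : ℂ) 1, HasDerivAt P (P' σ) σ)
    (hinv : ∀ σ ∈ Metric.closedBall (0 : ℂ) 1, g (P σ) = (l * σ) • P' σ)
    (σ : ℂ) (hσ : σ ∈ Metric.closedBall (0 : ℂ) 1) :
    (∀ t : ℝ, t ≤ 0 →
      HasDerivAt (fun s : ℝ => P (Complex.exp (l * (s : ℂ)) * σ))
        (g (P (Complex.exp (l * (t : ℂ)) * σ))) t) ∧
    Filter.Tendsto (fun t : ℝ => P (Complex.exp (l * (t : ℂ)) * σ))
      Filter.atBot (nhds (P 0)) := by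
  refine ⟨fun t ht => ?_, ?_⟩
  · have hmem := exp_mul_ofReal_mul_mem_closedBall hl.le ht hσ
    rw [hinv _ hmem]
    exact (hP _ hmem).scomp t (hasDerivAt_exp_mul_ofReal_mul l σ t)
  · have horbit : Tendsto (fun t : ℝ => exp (l * t) * σ) atBot (𝓝 0) := by
      simpa using (tendsto_exp_mul_ofReal_atBot hl).mul_const σ
    exact (hP 0 (Metric.mem_closedBall_self zero_le_one)).continuousAt.tendsto.comp horbit

/-- a solution P of the invariance equation conjugates the linear flow on the
disk to the nonlinear flow: t ↦ P(e^{λt}σ) solves a' = g(a) on (−∞,0] and tends to P(0). -/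
theorem stmt_6 {X : Type*} [NormedAddCommGroup X] [NormedSpace ℂ X] [CompleteSpace X]
    (P P' : ℂ → X) (g : X → X) (hg : LocallyLipschitz g)
    (l : ℂ) (hl : 0 < l.re)
    (hP : ∀ σ ∈ Metric.closedBall (0 : ℂ) 1, HasDerivAt P (P' σ) σ)
    (hinv : ∀ σ ∈ Metric.closedBall (0 : ℂ) 1, g (P σ) = (l * σ) • P' σ)
    (σ : ℂ) (hσ : σ ∈ Metric.closedBall (0 : ℂ) 1) :
    (∀ t : ℝ, t ≤ 0 →
      HasDerivAt (fun s : ℝ => P (Complex.exp (l * (s : ℂ)) * σ))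
        (g (P (Complex.exp (l * (t : ℂ)) * σ))) t) ∧
    Filter.Tendsto (fun t : ℝ => P (Complex.exp (l * (t : ℂ)) * σ))
      Filter.atBot (nhds (P 0)) :=
  stmt_6_general P P' g l hl hP hinv σ hσ
end

section
/- Suppose P : 𝔻 → X is analytic and satisfies g(P(σ)) = λ σ P'(σ) for all σ ∈ 𝔻 with Re λ > 0, where g : X → X is locally Lipschitz with g(ã) = 0 for ã := P(0). Then the image P(𝔻) is contained in the unstable set of ã, i.e., for every σ ∈ 𝔻 there is a solution a of a' = g(a) on (−∞,0] with a(0) = P(σ) and lim_{t→−∞} a(t) = ã. -/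
/-!
The invariance equation says that `P` conjugates the linear flow `σ ↦ e^{λt} σ` to the flow of
`g`: along the curve `t ↦ e^{λt} σ` the chain rule gives `d/dt P(e^{λt} σ) = λ e^{λt} σ P'(e^{λt} σ)
= g(P(e^{λt} σ))`. Since `Re λ > 0`, for `t ≤ 0` this curve stays in `𝔻` and it tends to `0` as
`t → -∞`, so `a(t) = P(e^{λt} σ)` is a backward orbit through `P(σ)` converging to `P(0)`.
-/

open Filter Topology Metric

namespace Complex

theorem norm_mul_exp_mul_ofReal (σ l : ℂ) (t : ℝ) :
    ‖σ * exp (l * t)‖ = ‖σ‖ * Real.exp (l.re * t) := by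
  rw [norm_mul, norm_exp, re_mul_ofReal]

theorem mul_exp_mul_ofReal_mem_closedBall {σ l : ℂ} {r t : ℝ} (hσ : σ ∈ closedBall (0 : ℂ) r)
    (hl : 0 ≤ l.re) (ht : t ≤ 0) : σ * exp (l * t) ∈ closedBall (0 : ℂ) r := by
  rw [mem_closedBall_zero_iff] at hσ ⊢
  rw [norm_mul_exp_mul_ofReal]
  have hexp : Real.exp (l.re * t) ≤ 1 :=
    Real.exp_le_one_iff.mpr (mul_nonpos_of_nonneg_of_nonpos hl ht)
  calc ‖σ‖ * Real.exp (l.re * t) ≤ ‖σ‖ * 1 := by gcongr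
    _ ≤ r := by rwa [mul_one]

theorem tendsto_mul_exp_mul_ofReal_atBot (σ : ℂ) {l : ℂ} (hl : 0 < l.re) :
    Tendsto (fun t : ℝ => σ * exp (l * t)) atBot (𝓝 0) := by
  rw [tendsto_zero_iff_norm_tendsto_zero]
  simp only [norm_mul_exp_mul_ofReal]
  have hexp : Tendsto (fun t : ℝ => Real.exp (l.re * t)) atBot (𝓝 0) :=
    Real.tendsto_exp_atBot.comp (tendsto_id.const_mul_atBot hl)
  simpa using hexp.const_mul ‖σ‖

theorem hasDerivAt_mul_exp_mul_ofReal (σ l : ℂ) (t : ℝ) :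
    HasDerivAt (fun s : ℝ => σ * exp (l * s)) (l * (σ * exp (l * t))) t := by
  have hexp : HasDerivAt (fun z : ℂ => exp (l * z)) (exp (l * t) * l) t := by
    simpa using ((hasDerivAt_id (t : ℂ)).const_mul l).cexp
  rw [mul_left_comm, mul_comm l]
  exact (hexp.comp_ofReal).const_mul σ

end Complex

theorem stmt_7_general {X : Type*} [NormedAddCommGroup X] [NormedSpace ℂ X]
    (P P' : ℂ → X) (g : X → X)
    (l : ℂ) (hl : 0 < l.re)
    (hP : ∀ σ ∈ Metric.closedBall (0 : ℂ) 1, HasDerivAt P (P' σ) σ)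
    (hinv : ∀ σ ∈ Metric.closedBall (0 : ℂ) 1, g (P σ) = (l * σ) • P' σ) :
    ∀ σ ∈ Metric.closedBall (0 : ℂ) 1, ∃ a : ℝ → X,
      (∀ t : ℝ, t ≤ 0 → HasDerivAt a (g (a t)) t) ∧ a 0 = P σ ∧
      Filter.Tendsto a Filter.atBot (nhds (P 0)) := by
  intro σ hσ
  refine ⟨fun t => P (σ * Complex.exp (l * t)), fun t ht => ?_, by simp, ?_⟩
  · have hmem := Complex.mul_exp_mul_ofReal_mem_closedBall hσ hl.le ht
    rw [hinv _ hmem]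
    exact (hP _ hmem).scomp t (Complex.hasDerivAt_mul_exp_mul_ofReal σ l t)
  · have hP0 : ContinuousAt P 0 := (hP 0 (mem_closedBall_self zero_le_one)).continuousAt
    exact hP0.tendsto.comp (Complex.tendsto_mul_exp_mul_ofReal_atBot σ hl)

/-- the image of a solution P of the invariance equation lies in the
unstable set of the equilibrium ã = P(0). -/
theorem stmt_7 {X : Type*} [NormedAddCommGroup X] [NormedSpace ℂ X]
    (P P' : ℂ → X) (g : X → X) (hg : LocallyLipschitz g)
    (l : ℂ) (hl : 0 < l.re)
    (hP : ∀ σ ∈ Metric.closedBall (0 : ℂ) 1, HasDerivAt P (P' σ) σ)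
    (hinv : ∀ σ ∈ Metric.closedBall (0 : ℂ) 1, g (P σ) = (l * σ) • P' σ)
    (heqm : g (P 0) = 0) :
    ∀ σ ∈ Metric.closedBall (0 : ℂ) 1, ∃ a : ℝ → X,
      (∀ t : ℝ, t ≤ 0 → HasDerivAt a (g (a t)) t) ∧ a 0 = P σ ∧
      Filter.Tendsto a Filter.atBot (nhds (P 0)) :=
  stmt_7_general P P' g l hl hP hinv
end

section
/- Let Φ : ℝ₊ × X → X be a semiflow on a complex Banach space X such that for each t ≥ 0 and each continuous linear functional π : X → ℂ, the map z ↦ π(Φ(t, P(z))) is analytic on the open unit disk 𝔻, where P : 𝔻 → X is an analytic parameterization of the local unstable manifold of an equilibrium u₁ with P(0) = u₁. Suppose there exists q₀ ∈ 𝔻 and an open neighborhood U ⊆ 𝔻 of q₀ such that Φ(t, P(q)) → 0 as t → ∞ for all q ∈ U, and u₁ ≠ 0. Then the forward orbit of the image P(𝔻) under Φ is unbounded: there is no constant K with ‖Φ(n, P(z))‖ ≤ K for all n ∈ ℕ and z ∈ 𝔻. -/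
/-!
Suppose `‖Φ n (P z)‖ ≤ K` on the disc and pick `ℓ` in the dual with `ℓ u₁ ≠ 0`. The functions
`fₙ z = ℓ (Φ n (P z))` are holomorphic and uniformly bounded on the disc, and `fₙ → 0` on `U`.
A Vitali-type argument propagates the convergence to the whole disc: at a centre near which
`fₙ → 0`, the Taylor coefficients of `fₙ` tend to `0` (Cauchy integrals over a small circle plus
dominated convergence), and the Cauchy estimates give a geometric majorant of the Taylor series
uniform in `n`, so `fₙ → 0` on the largest disc about that centre; connectedness finishes. But
`fₙ 0 = ℓ (Φ n u₁) = ℓ u₁ ≠ 0` for all `n`.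
-/

open Metric Filter Topology Real NNReal

lemma tendsto_zero_of_hasFPowerSeriesOnBall {𝕜 E F ι : Type*} [NontriviallyNormedField 𝕜]
    [NormedAddCommGroup E] [NormedSpace 𝕜 E] [NormedAddCommGroup F] [NormedSpace 𝕜 F]
    [CompleteSpace F] {l : Filter ι} {f : ι → E → F} {p : ι → FormalMultilinearSeries 𝕜 E F}
    {c : E} {ρ : ℝ≥0} {M : ℝ} (hp : ∀ n, HasFPowerSeriesOnBall (f n) (p n) c ρ)
    (hbound : ∀ n k, ‖p n k‖ ≤ M * (ρ : ℝ)⁻¹ ^ k)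
    (hlim : ∀ k, Tendsto (fun n => ‖p n k‖) l (𝓝 0)) {w : E} (hw : w ∈ ball c ρ) :
    Tendsto (f · w) l (𝓝 0) := by
  have hρ : 0 < (ρ : ℝ) := dist_nonneg.trans_lt (mem_ball.mp hw)
  have hy : ‖w - c‖ / ρ < 1 := (div_lt_one hρ).mpr (by rwa [← dist_eq_norm])
  have hterm : ∀ n k, ‖p n k fun _ => w - c‖ ≤ ‖p n k‖ * ‖w - c‖ ^ k := fun n k => by
    simpa using (p n k).le_opNorm fun _ => w - c
  have hsum : ∀ n, f n w = ∑' k, p n k fun _ => w - c := fun n => by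
    have := (hp n).hasSum (y := w - c) (by simpa [edist_dist, dist_eq_norm] using hw)
    rw [add_sub_cancel] at this
    exact this.tsum_eq.symm
  simp_rw [hsum]
  simpa using tendsto_tsum_of_dominated_convergence (g := fun _ => (0 : F))
    ((summable_geometric_of_lt_one (by positivity) hy).mul_left M)
    (fun k => squeeze_zero_norm (hterm · k) (by simpa using (hlim k).mul_const (‖w - c‖ ^ k)))
    (Eventually.of_forall fun n k => (hterm n k).trans <| by
      rw [div_pow, div_eq_mul_inv, ← inv_pow, ← mul_assoc, mul_right_comm]
      gcongr
      exact hbound n k)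

section

variable {E : Type*} [NormedAddCommGroup E] [NormedSpace ℂ E]

lemma norm_cauchyPowerSeries_le_of_norm_le {f : ℂ → E} {c : ℂ} {r M : ℝ}
    (hM : ∀ z ∈ sphere c |r|, ‖f z‖ ≤ M) (k : ℕ) :
    ‖cauchyPowerSeries f c r k‖ ≤ M * |r|⁻¹ ^ k := by
  have hint : ∫ θ in (0)..2 * π, ‖f (circleMap c r θ)‖ ≤ M * (2 * π) := by
    refine (le_abs_self _).trans ?_
    have := intervalIntegral.norm_integral_le_of_norm_le_const
      (f := fun θ => ‖f (circleMap c r θ)‖) (a := 0) (b := 2 * π) (C := M)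
      fun θ _ => by simpa using hM _ (circleMap_mem_sphere' c r θ)
    simpa [abs_of_pos two_pi_pos] using this
  refine (norm_cauchyPowerSeries_le f c r k).trans (mul_le_mul_of_nonneg_right ?_ (by positivity))
  calc (2 * π)⁻¹ * ∫ θ in (0)..2 * π, ‖f (circleMap c r θ)‖
      ≤ (2 * π)⁻¹ * (M * (2 * π)) := by gcongr
    _ = M := by field_simp

lemma tendsto_norm_cauchyPowerSeries_zero {ι : Type*} {l : Filter ι} [l.IsCountablyGenerated]
    {f : ι → ℂ → E} {c : ℂ} {r M : ℝ} (hr : 0 < r)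
    (hcont : ∀ n, ContinuousOn (f n) (sphere c r))
    (hM : ∀ n, ∀ z ∈ sphere c r, ‖f n z‖ ≤ M)
    (hlim : ∀ z ∈ sphere c r, Tendsto (f · z) l (𝓝 0)) (k : ℕ) :
    Tendsto (fun n => ‖cauchyPowerSeries (f n) c r k‖) l (𝓝 0) := by
  have hsphere : ∀ θ, circleMap c r θ ∈ sphere c r := circleMap_mem_sphere c hr.le
  have hint : Tendsto (fun n => ∫ θ in (0)..2 * π, ‖f n (circleMap c r θ)‖) l
      (𝓝 (∫ _ in (0)..2 * π, (0 : ℝ))) := by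
    refine intervalIntegral.tendsto_integral_filter_of_dominated_convergence (fun _ => M)
      (Eventually.of_forall fun n => ?_) (Eventually.of_forall fun n => ?_)
      intervalIntegrable_const ?_
    · exact ((hcont n).comp_continuous (continuous_circleMap c r) hsphere).norm
        |>.aestronglyMeasurable
    · exact .of_forall fun θ _ => by simpa using hM n _ (hsphere θ)
    · exact .of_forall fun θ _ => by simpa using (hlim _ (hsphere θ)).norm
  rw [intervalIntegral.integral_zero] at hint
  refine squeeze_zero (fun n => norm_nonneg _)
    (fun n => norm_cauchyPowerSeries_le (f n) c r k) ?_
  simpa using (hint.const_mul (2 * π)⁻¹).mul_const (|r|⁻¹ ^ k)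

lemma tendsto_zero_on_ball_of_eventually [CompleteSpace E] {ι : Type*} {l : Filter ι}
    [l.IsCountablyGenerated] {f : ι → ℂ → E} {c : ℂ} {R M : ℝ}
    (hf : ∀ n, DifferentiableOn ℂ (f n) (ball c R)) (hM : ∀ n, ∀ z ∈ ball c R, ‖f n z‖ ≤ M)
    (hlim : ∀ᶠ z in 𝓝 c, Tendsto (f · z) l (𝓝 0)) {w : ℂ} (hw : w ∈ ball c R) :
    Tendsto (f · w) l (𝓝 0) := by
  obtain ⟨ρ, hwρ, hρR⟩ := exists_between (mem_ball.mp hw)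
  lift ρ to ℝ≥0 using dist_nonneg.trans hwρ.le
  have hρ : 0 < ρ := by exact_mod_cast dist_nonneg.trans_lt hwρ
  obtain ⟨r, hr, hball⟩ := Metric.eventually_nhds_iff_ball.mp hlim
  obtain ⟨s, hs, hsρ, hsr⟩ : ∃ s : ℝ≥0, 0 < s ∧ (s : ℝ) ≤ ρ ∧ (s : ℝ) < r :=
    ⟨⟨min ρ (r / 2), by positivity⟩,
      NNReal.coe_pos.mp (lt_min (by exact_mod_cast hρ) (half_pos hr)),
      min_le_left _ _, (min_le_right _ _).trans_lt (half_lt_self hr)⟩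
  have hclosed : ∀ t : ℝ≥0, (t : ℝ) ≤ ρ → closedBall c t ⊆ ball c R :=
    fun t ht => (closedBall_subset_closedBall ht).trans (closedBall_subset_ball hρR)
  have hps : ∀ (t : ℝ≥0), 0 < t → (t : ℝ) ≤ ρ → ∀ n,
      HasFPowerSeriesOnBall (f n) (cauchyPowerSeries (f n) c t) c t :=
    fun t ht htρ n => ((hf n).mono (hclosed t htρ)).hasFPowerSeriesOnBall ht
  -- The Taylor coefficients at `c` do not depend on the radius of the Cauchy integral, so they
  -- can be computed on the small circle of radius `s`, on which `f n → 0`.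
  have hcoeff : ∀ n, cauchyPowerSeries (f n) c ρ = cauchyPowerSeries (f n) c s := fun n =>
    (hps ρ hρ le_rfl n).hasFPowerSeriesAt.eq_formalMultilinearSeries
      (hps s hs hsρ n).hasFPowerSeriesAt
  have hsphere : ∀ t : ℝ≥0, (t : ℝ) ≤ ρ → sphere c t ⊆ ball c R :=
    fun t ht => sphere_subset_closedBall.trans (hclosed t ht)
  refine tendsto_zero_of_hasFPowerSeriesOnBall (hps ρ hρ le_rfl) (M := M) (fun n k => ?_)
    (fun k => ?_) (mem_ball.mpr hwρ)
  · simpa using norm_cauchyPowerSeries_le_of_norm_le (c := c) (r := ρ)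
      (fun z hz => hM n z (hsphere ρ le_rfl (by rwa [NNReal.abs_eq] at hz))) k
  · simp_rw [hcoeff]
    exact tendsto_norm_cauchyPowerSeries_zero (M := M) hs
      (fun n => (hf n).continuousOn.mono (hsphere s hsρ))
      (fun n z hz => hM n z (hsphere s hsρ hz))
      (fun z hz => hball z (sphere_subset_ball hsr hz)) k

lemma tendsto_zero_of_isPreconnected [CompleteSpace E] {ι : Type*} {l : Filter ι}
    [l.IsCountablyGenerated] {f : ι → ℂ → E} {U : Set ℂ} {M : ℝ} {z₀ : ℂ}
    (hU : IsOpen U) (hUc : IsPreconnected U) (hf : ∀ n, DifferentiableOn ℂ (f n) U)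
    (hM : ∀ n, ∀ z ∈ U, ‖f n z‖ ≤ M) (hz₀ : z₀ ∈ U)
    (hlim : ∀ᶠ z in 𝓝 z₀, Tendsto (f · z) l (𝓝 0)) {z : ℂ} (hz : z ∈ U) :
    Tendsto (f · z) l (𝓝 0) := by
  suffices hUT : U ⊆ {z | ∀ᶠ w in 𝓝 z, Tendsto (f · w) l (𝓝 0)} from (hUT hz).self_of_nhds
  refine hUc.subset_of_closure_inter_subset isOpen_setOfPred_eventually_nhds ⟨z₀, hz₀, hlim⟩ ?_
  rintro x ⟨hxT, hxU⟩
  obtain ⟨ε, hε, hεU⟩ := Metric.isOpen_iff.mp hU x hxU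
  obtain ⟨y, hyT, hxy⟩ := Metric.mem_closure_iff.mp hxT (ε / 2) (half_pos hε)
  have hyU : ball y (ε / 2) ⊆ U :=
    (ball_subset_ball' (by rw [dist_comm]; linarith)).trans hεU
  filter_upwards [isOpen_ball.mem_nhds (mem_ball.mpr hxy)] with w hw
  exact tendsto_zero_on_ball_of_eventually (fun n => (hf n).mono hyU)
    (fun n z hz => hM n z (hyU hz)) hyT hw

end

/-- forcing argument: if a semiflow has analytic projected time-t maps along
an analytic parameterization P of the unstable manifold of an equilibrium u₁ ≠ 0, and an
open set of points of P(𝔻) is heteroclinic to 0, then the forward orbit of P(𝔻) cannot be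
uniformly bounded. -/
theorem stmt_15 {X : Type*} [NormedAddCommGroup X] [NormedSpace ℂ X]
    (Φ : ℝ → X → X) (P : ℂ → X) (u₁ : X)
    (hP0 : P 0 = u₁) (hu₁ : u₁ ≠ 0)
    (hequil : ∀ t : ℝ, 0 ≤ t → Φ t u₁ = u₁)
    (hanal : ∀ t : ℝ, 0 ≤ t → ∀ pl : X →L[ℂ] ℂ,
      DifferentiableOn ℂ (fun z => pl (Φ t (P z))) (Metric.ball 0 1))
    (U : Set ℂ) (hUo : IsOpen U) (hUne : U.Nonempty) (hUsub : U ⊆ Metric.ball 0 1)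
    (hhet : ∀ q ∈ U, Filter.Tendsto (fun t => Φ t (P q)) Filter.atTop (nhds 0)) :
    ¬ ∃ K : ℝ, ∀ n : ℕ, ∀ z ∈ Metric.ball (0 : ℂ) 1, ‖Φ n (P z)‖ ≤ K := by
  rintro ⟨K, hK⟩
  obtain ⟨q₀, hq₀⟩ := hUne
  obtain ⟨ℓ, hℓu₁⟩ := SeparatingDual.exists_ne_zero (R := ℂ) hu₁
  have hlim : Tendsto (fun n : ℕ => ℓ (Φ n (P 0))) atTop (𝓝 0) := by
    refine tendsto_zero_of_isPreconnected (f := fun (n : ℕ) z => ℓ (Φ n (P z))) (M := ‖ℓ‖ * K)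
      isOpen_ball (convex_ball 0 1).isPreconnected (fun n => hanal n n.cast_nonneg ℓ)
      (fun n z hz => ?_) (hUsub hq₀) ?_ (mem_ball_self one_pos)
    · exact (ℓ.le_opNorm _).trans (by gcongr; exact hK n z hz)
    · filter_upwards [hUo.mem_nhds hq₀] with q hq
      exact (ℓ.continuous.tendsto' 0 0 (map_zero ℓ)).comp
        ((hhet q hq).comp tendsto_natCast_atTop_atTop)
  have hconst : ∀ n : ℕ, ℓ (Φ n (P 0)) = ℓ u₁ := fun n => by rw [hP0, hequil n n.cast_nonneg]
  simp only [hconst] at hlim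
  exact hℓu₁ (tendsto_nhds_unique tendsto_const_nhds hlim)
end

section
/- If there exists one heteroclinic orbit u_a(t) of u_t = e^{iθ}(u_{xx}+u²) (period-1 periodic boundary conditions) from a nontrivial equilibrium u₁ to 0, then for each n ∈ ℤ, n ≠ 0, the rescaled function u_n(t,x) := n² u_a(n²t, nx) is a heteroclinic orbit from the nontrivial equilibrium n²u₁(nx) to 0. Consequently, existence of one heteroclinic connection implies the existence of countably infinitely many heteroclinic connections between distinct pairs of equilibria of arbitrarily large norm. -/
/-!
The equation `u_t = λ (u_xx + u²)` is invariant under `u(t, x) ↦ a² u(a² t, a x)`: each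
derivative in `x` contributes a factor `a`, the derivative in `t` a factor `a²`, and both sides
pick up the same factor `a⁴`. For `a = n` an integer the rescaling preserves period `1`, and
since `n² t → ±∞` as `t → ±∞` the limits at `t = ±∞` are rescaled as well.
-/

open Filter

lemma deriv_const_mul_comp_mul (c : ℂ) (a : ℝ) (f : ℝ → ℂ) (x : ℝ) :
    deriv (fun y => c * f (a * y)) x = c * a * deriv f (a * x) := by
  rw [deriv_const_mul_field, deriv_comp_mul_left (f := f), Complex.real_smul, mul_assoc]

lemma deriv_deriv_const_mul_comp_mul (c : ℂ) (a : ℝ) (f : ℝ → ℂ) (x : ℝ) :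
    deriv (deriv fun y => c * f (a * y)) x = c * a ^ 2 * deriv (deriv f) (a * x) := by
  have h : deriv (fun y => c * f (a * y)) = fun y => c * a * deriv f (a * y) :=
    funext (deriv_const_mul_comp_mul c a f)
  rw [h, deriv_const_mul_comp_mul]
  ring

lemma rescale_equilibrium {u : ℝ → ℂ} (hu : ∀ x, deriv (deriv u) x + u x ^ 2 = 0)
    (a x : ℝ) :
    deriv (deriv fun y => (a : ℂ) ^ 2 * u (a * y)) x + ((a : ℂ) ^ 2 * u (a * x)) ^ 2 = 0 := by
  rw [deriv_deriv_const_mul_comp_mul]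
  linear_combination (a : ℂ) ^ 4 * hu (a * x)

lemma rescale_solution {u : ℝ → ℝ → ℂ} {c : ℂ}
    (hu : ∀ t x, deriv (fun s => u s x) t = c * (deriv (deriv (u t)) x + u t x ^ 2))
    (a t x : ℝ) :
    deriv (fun s => (a : ℂ) ^ 2 * u (a ^ 2 * s) (a * x)) t
      = c * (deriv (deriv fun y => (a : ℂ) ^ 2 * u (a ^ 2 * t) (a * y)) x
        + ((a : ℂ) ^ 2 * u (a ^ 2 * t) (a * x)) ^ 2) := by
  rw [deriv_const_mul_comp_mul _ _ (fun s => u s (a * x)), hu,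
    deriv_deriv_const_mul_comp_mul]
  push_cast
  ring

theorem stmt_17_general (θ : ℝ) (u₁ : ℝ → ℂ) (ua : ℝ → ℝ → ℂ)
    (hper : ∀ t x, ua t (x + 1) = ua t x)
    (hpde : ∀ t x, deriv (fun s => ua s x) t
      = Complex.exp (θ * Complex.I) * (deriv (deriv (ua t)) x + (ua t x) ^ 2))
    (hequil : ∀ x, deriv (deriv u₁) x + (u₁ x) ^ 2 = 0)
    (hlimm : ∀ x, Filter.Tendsto (fun t => ua t x) Filter.atBot (nhds (u₁ x)))
    (hlimp : ∀ x, Filter.Tendsto (fun t => ua t x) Filter.atTop (nhds 0))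
    (n : ℤ) (hn : n ≠ 0) :
    (∀ x, deriv (deriv (fun y => (n : ℂ) ^ 2 * u₁ ((n : ℝ) * y))) x
        + ((n : ℂ) ^ 2 * u₁ ((n : ℝ) * x)) ^ 2 = 0) ∧
    (∀ t x, deriv (fun s => (n : ℂ) ^ 2 * ua ((n : ℝ) ^ 2 * s) ((n : ℝ) * x)) t
      = Complex.exp (θ * Complex.I) *
          (deriv (deriv (fun y => (n : ℂ) ^ 2 * ua ((n : ℝ) ^ 2 * t) ((n : ℝ) * y))) x
            + ((n : ℂ) ^ 2 * ua ((n : ℝ) ^ 2 * t) ((n : ℝ) * x)) ^ 2)) ∧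
    (∀ t x, (n : ℂ) ^ 2 * ua ((n : ℝ) ^ 2 * t) ((n : ℝ) * (x + 1))
      = (n : ℂ) ^ 2 * ua ((n : ℝ) ^ 2 * t) ((n : ℝ) * x)) ∧
    (∀ x, Filter.Tendsto (fun t => (n : ℂ) ^ 2 * ua ((n : ℝ) ^ 2 * t) ((n : ℝ) * x))
      Filter.atBot (nhds ((n : ℂ) ^ 2 * u₁ ((n : ℝ) * x)))) ∧
    (∀ x, Filter.Tendsto (fun t => (n : ℂ) ^ 2 * ua ((n : ℝ) ^ 2 * t) ((n : ℝ) * x))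
      Filter.atTop (nhds 0)) := by
  have hn2 : (0 : ℝ) < (n : ℝ) ^ 2 := by positivity
  refine ⟨fun x => ?_, fun t x => ?_, fun t x => ?_, fun x => ?_, fun x => ?_⟩
  · exact_mod_cast rescale_equilibrium hequil n x
  · exact_mod_cast rescale_solution hpde n t x
  · have hperiod := Function.Periodic.int_mul (hper ((n : ℝ) ^ 2 * t)) n ((n : ℝ) * x)
    rw [mul_one] at hperiod
    rw [mul_add, mul_one, hperiod]
  · exact ((hlimm _).comp (tendsto_id.const_mul_atBot hn2)).const_mul _
  · simpa using ((hlimp _).comp (tendsto_id.const_mul_atTop hn2)).const_mul ((n : ℂ) ^ 2)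

/-- rescaling a heteroclinic orbit from u₁ to 0 gives, for each n ≠ 0, a
heteroclinic orbit from the rescaled equilibrium n²u₁(n·) to 0. -/
theorem stmt_17 (θ : ℝ) (u₁ : ℝ → ℂ) (ua : ℝ → ℝ → ℂ)
    (hu1 : Differentiable ℝ u₁) (hu1' : Differentiable ℝ (deriv u₁))
    (ht : ∀ x, Differentiable ℝ fun t => ua t x)
    (hx1 : ∀ t, Differentiable ℝ (ua t))
    (hx2 : ∀ t, Differentiable ℝ (deriv (ua t)))
    (hper : ∀ t x, ua t (x + 1) = ua t x)
    (hpde : ∀ t x, deriv (fun s => ua s x) t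
      = Complex.exp (θ * Complex.I) * (deriv (deriv (ua t)) x + (ua t x) ^ 2))
    (hequil : ∀ x, deriv (deriv u₁) x + (u₁ x) ^ 2 = 0)
    (hlimm : ∀ x, Filter.Tendsto (fun t => ua t x) Filter.atBot (nhds (u₁ x)))
    (hlimp : ∀ x, Filter.Tendsto (fun t => ua t x) Filter.atTop (nhds 0))
    (n : ℤ) (hn : n ≠ 0) :
    (∀ x, deriv (deriv (fun y => (n : ℂ) ^ 2 * u₁ ((n : ℝ) * y))) x
        + ((n : ℂ) ^ 2 * u₁ ((n : ℝ) * x)) ^ 2 = 0) ∧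
    (∀ t x, deriv (fun s => (n : ℂ) ^ 2 * ua ((n : ℝ) ^ 2 * s) ((n : ℝ) * x)) t
      = Complex.exp (θ * Complex.I) *
          (deriv (deriv (fun y => (n : ℂ) ^ 2 * ua ((n : ℝ) ^ 2 * t) ((n : ℝ) * y))) x
            + ((n : ℂ) ^ 2 * ua ((n : ℝ) ^ 2 * t) ((n : ℝ) * x)) ^ 2)) ∧
    (∀ t x, (n : ℂ) ^ 2 * ua ((n : ℝ) ^ 2 * t) ((n : ℝ) * (x + 1))
      = (n : ℂ) ^ 2 * ua ((n : ℝ) ^ 2 * t) ((n : ℝ) * x)) ∧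
    (∀ x, Filter.Tendsto (fun t => (n : ℂ) ^ 2 * ua ((n : ℝ) ^ 2 * t) ((n : ℝ) * x))
      Filter.atBot (nhds ((n : ℂ) ^ 2 * u₁ ((n : ℝ) * x)))) ∧
    (∀ x, Filter.Tendsto (fun t => (n : ℂ) ^ 2 * ua ((n : ℝ) ^ 2 * t) ((n : ℝ) * x))
      Filter.atTop (nhds 0)) :=
  stmt_17_general θ u₁ ua hper hpde hequil hlimm hlimp n hn
end
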